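/- If a tuple Φ ∈ ℤ^n is C*_{Z,3}-realizable, then the one-tuple state ((λ1,...,λn)) = Φ can be obtained from the state ((0),(0),...,(0)) by a finite sequence of valid moves of types 1, 2 and 3 in which all type 2 moves are performed at the beginning of the sequence (i.e., every type 2 move precedes every move of type 1 or 3). -/

import Mathlib

namespace CPaper


/-- The six types of moves on states (all indices 0-based). -/
inductive Move where
  | t1 (d : ℕ)
  | t2 (i : ℕ)
  | t3 (i j : ℕ)
  | t4 (i j : ℕ)
  | t5 (i j : ℕ)
  | t6 (i j : ℕ)

/-- A state is a list of tuples of integers. -/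
abbrev State := List (List ℤ)

/-- A genuine state: at least one tuple, and all tuples nonempty. -/
def IsState (Φ : State) : Prop := Φ ≠ [] ∧ ∀ t ∈ Φ, t ≠ []

/-- The entries of a state, read in order (flattened). -/
def entries (Φ : State) : List ℤ := Φ.flatten

/-- The number of positions of a state. -/
def numPos (Φ : State) : ℕ := (entries Φ).length

/-- The value at the (0-based) position `i` of the state `Φ`. -/
def entry (Φ : State) (i : ℕ) : ℤ := (entries Φ).getD i 0

/-- The (0-based) index of the tuple containing the flat position `i`. -/
def tupleIdx : State → ℕ → ℕ
  | [], _ => 0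
  | t :: ts, i => if i < t.length then 0 else tupleIdx ts (i - t.length) + 1

/-- Positions `i` and `j` lie in the same tuple of `Φ`. -/
def SameTuple (Φ : State) (i j : ℕ) : Prop := tupleIdx Φ i = tupleIdx Φ j

/-- Position `i` is dominant in `Φ`: its value bounds the absolute value of
every entry of the tuple containing it. -/
def DominantAt (Φ : State) (i : ℕ) : Prop :=
  ∀ k, k < numPos Φ → SameTuple Φ i k → |entry Φ k| ≤ entry Φ i

/-- Apply `f` at flat position `i`, preserving the tuple structure. -/
def modifyFlat (f : ℤ → ℤ) : ℕ → State → State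
  | _, [] => []
  | i, t :: ts =>
    if i < t.length then (t.take i ++ f (t.getD i 0) :: t.drop (i + 1)) :: ts
    else t :: modifyFlat f (i - t.length) ts

/-- Concatenate the `d`-th and `(d+1)`-th tuples of `Φ` (0-based). -/
def joinAt (Φ : State) (d : ℕ) : State :=
  Φ.take d ++ (Φ.getD d [] ++ Φ.getD (d + 1) []) :: Φ.drop (d + 2)

/-- The action of a move on a state. -/
def Move.apply : Move → State → State
  | .t1 d, Φ => joinAt Φ d
  | .t2 i, Φ => modifyFlat (· + 1) i Φ
  | .t3 i j, Φ => modifyFlat (· - 1) j (modifyFlat (· + 1) i Φ)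
  | .t4 i j, Φ => modifyFlat (· - 1) j (modifyFlat (· + 1) i Φ)
  | .t5 i j, Φ => modifyFlat (· + 1) j (modifyFlat (· + 1) i Φ)
  | .t6 i j, Φ => modifyFlat (· + 1) j (modifyFlat (· + 1) i Φ)

/-- A move is admissible for `Φ` when its indices are within bounds. -/
def Move.Admissible : Move → State → Prop
  | .t1 d, Φ => d + 1 < Φ.length
  | .t2 i, Φ => i < numPos Φ
  | .t3 i j, Φ => i < numPos Φ ∧ j < numPos Φ ∧ i ≠ j
  | .t4 i j, Φ => i < numPos Φ ∧ j < numPos Φ ∧ i ≠ j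
  | .t5 i j, Φ => i < numPos Φ ∧ j < numPos Φ ∧ i ≠ j
  | .t6 i j, Φ => i < numPos Φ ∧ j < numPos Φ ∧ i ≠ j

/-- Validity of a move for a state. -/
def Move.Valid : Move → State → Prop
  | .t1 d, Φ => d + 1 < Φ.length
  | .t2 i, Φ => i < numPos Φ ∧ DominantAt Φ i
  | .t3 i j, Φ =>
      i < numPos Φ ∧ j < numPos Φ ∧ i ≠ j ∧ SameTuple Φ i j ∧ DominantAt Φ i ∧ entry Φ j ≤ 0
  | .t4 i j, Φ =>
      i < numPos Φ ∧ j < numPos Φ ∧ i ≠ j ∧ SameTuple Φ i j ∧ DominantAt Φ i ∧ 0 < entry Φ j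
  | .t5 i j, Φ =>
      i < numPos Φ ∧ j < numPos Φ ∧ i ≠ j ∧ SameTuple Φ i j ∧ DominantAt Φ i ∧ entry Φ j < 0
  | .t6 i j, Φ =>
      i < numPos Φ ∧ j < numPos Φ ∧ i ≠ j ∧ SameTuple Φ i j ∧ DominantAt Φ i ∧ 0 ≤ entry Φ j

def Move.isType1 : Move → Prop
  | .t1 _ => True
  | _ => False

def Move.isType2 : Move → Prop
  | .t2 _ => True
  | _ => False

def Move.isType3 : Move → Prop
  | .t3 _ _ => True
  | _ => False

/-- The move is of one of the types 1, 2 or 3. -/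
def Move.isType123 : Move → Prop
  | .t1 _ => True
  | .t2 _ => True
  | .t3 _ _ => True
  | _ => False

/-- `ValidSeq ms Φ Ψ`: the list of moves `ms`, applied in order starting from `Φ`,
consists of valid moves and ends at `Ψ`. -/
def ValidSeq : List Move → State → State → Prop
  | [], Φ, Ψ => Φ = Ψ
  | m :: ms, Φ, Ψ => m.Valid Φ ∧ ValidSeq ms (m.apply Φ) Ψ

/-- A tuple of integers is C*_{Z,6}-realizable: the one-tuple state `[l]` is reachable
from `((0),...,(0))` by a finite sequence of valid moves of types 1–6. -/
def CStarZ6 (l : List ℤ) : Prop :=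
  ∃ ms : List Move, ValidSeq ms (List.replicate l.length ([0] : List ℤ)) [l]

/-- A tuple of integers is C*_{Z,3}-realizable: the one-tuple state `[l]` is reachable
from `((0),...,(0))` by a finite sequence of valid moves of types 1, 2 and 3. -/
def CStarZ3 (l : List ℤ) : Prop :=
  ∃ ms : List Move, (∀ m ∈ ms, m.isType123) ∧
    ValidSeq ms (List.replicate l.length ([0] : List ℤ)) [l]

/-!
A type 2 move can always be moved in front of a type 1 or type 3 move that immediately precedes
it. Joining two tuples only enlarges tuples, so a position dominant after `T1` was dominant before
it, and `T1` commutes with `T2`. For `T3^{ab}` followed by `T2^i` we have `i ≠ b`, because the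
negative value `Φ[b] - 1` cannot be dominant. If `i` lies outside the tuple of `a` and `b`, the two
moves commute. Otherwise `T3^{ab}, T2^i` has the same effect as `T2^a, T3^{ib}`: `T2^a` keeps `a`
dominant, and `i` is dominant afterwards because after `T3^{ab}` it already bounded `Φ[a] + 1`.
Bubbling every type 2 move to the front with these exchanges proves the theorem.
-/

def shape (Φ : State) : List ℕ := Φ.map List.length

lemma entries_cons (t : List ℤ) (ts : State) : entries (t :: ts) = t ++ entries ts := by
  simp [entries]

lemma numPos_cons (t : List ℤ) (ts : State) : numPos (t :: ts) = t.length + numPos ts := by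
  simp [numPos, entries_cons]

lemma eq_of_shape_eq_of_entries_eq {Φ Ψ : State} (hs : shape Φ = shape Ψ)
    (he : entries Φ = entries Ψ) : Φ = Ψ := by
  induction Φ generalizing Ψ with
  | nil => cases Ψ <;> simp_all [shape]
  | cons t ts ih =>
    cases Ψ with
    | nil => simp [shape] at hs
    | cons u us =>
      simp only [shape, List.map_cons, List.cons.injEq] at hs
      rw [entries_cons, entries_cons] at he
      obtain ⟨rfl, hts⟩ := List.append_inj he hs.1
      rw [ih hs.2 hts]

lemma tupleIdx_eq_of_shape_eq {Φ Ψ : State} (h : shape Φ = shape Ψ) (i : ℕ) :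
    tupleIdx Φ i = tupleIdx Ψ i := by
  induction Φ generalizing Ψ i with
  | nil => cases Ψ <;> simp_all [shape]
  | cons t ts ih =>
    cases Ψ with
    | nil => simp [shape] at h
    | cons u us =>
      simp only [shape, List.map_cons, List.cons.injEq] at h
      rw [tupleIdx, tupleIdx, h.1, ih h.2]

lemma DominantAt.entry_nonneg {Φ : State} {i : ℕ} (h : DominantAt Φ i) (hi : i < numPos Φ) :
    0 ≤ entry Φ i :=
  (abs_nonneg _).trans (h i hi rfl)

lemma DominantAt.of_le {Φ : State} {a i : ℕ} (ha : DominantAt Φ a) (hia : SameTuple Φ i a)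
    (hle : entry Φ a ≤ entry Φ i) : DominantAt Φ i := fun k hk hik =>
  (ha k hk (hia.symm.trans hik)).trans hle

section modifyFlat

variable (f g : ℤ → ℤ)

lemma shape_modifyFlat (i : ℕ) (Φ : State) : shape (modifyFlat f i Φ) = shape Φ := by
  induction Φ generalizing i with
  | nil => rfl
  | cons t ts ih =>
    rw [modifyFlat]
    split
    · simp only [shape, List.map_cons, List.length_append, List.length_take, List.length_cons,
        List.length_drop, List.cons.injEq, and_true]
      omega
    · simp only [shape, List.map_cons] at ih ⊢
      rw [ih]

lemma length_modifyFlat (i : ℕ) (Φ : State) : (modifyFlat f i Φ).length = Φ.length := by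
  simpa [shape] using congrArg List.length (shape_modifyFlat f i Φ)

lemma entries_modifyFlat (i : ℕ) (Φ : State) :
    entries (modifyFlat f i Φ) =
      if i < numPos Φ then (entries Φ).set i (f (entry Φ i)) else entries Φ := by
  induction Φ generalizing i with
  | nil => simp [modifyFlat, entries, numPos]
  | cons t ts ih =>
    rw [modifyFlat, numPos_cons]
    split_ifs with h
    · rw [entries_cons, entries_cons, List.set_append, if_pos h, entry, entries_cons,
        List.getD_append _ _ _ _ h, List.set_eq_take_append_cons_drop, if_pos h]
    · omega
    · rw [entries_cons, entries_cons, ih, if_pos (by omega), List.set_append, if_neg h, entry,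
        entry, entries_cons, List.getD_append_right _ _ _ _ (by omega)]
    · rw [entries_cons, entries_cons, ih, if_neg (by omega)]

lemma numPos_modifyFlat (i : ℕ) (Φ : State) : numPos (modifyFlat f i Φ) = numPos Φ := by
  rw [numPos, entries_modifyFlat]
  split_ifs <;> simp [numPos]

lemma entry_modifyFlat_self {i : ℕ} {Φ : State} (hi : i < numPos Φ) :
    entry (modifyFlat f i Φ) i = f (entry Φ i) := by
  rw [entry, entries_modifyFlat, if_pos hi, List.getD_eq_getElem?_getD, List.getElem?_set_self]
  · rfl
  · exact hi

lemma entry_modifyFlat_of_ne {i k : ℕ} (Φ : State) (h : i ≠ k) :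
    entry (modifyFlat f i Φ) k = entry Φ k := by
  rw [entry, entries_modifyFlat]
  split_ifs
  · rw [List.getD_eq_getElem?_getD, List.getElem?_set_ne h]; rfl
  · rfl

lemma sameTuple_modifyFlat {i : ℕ} {Φ : State} {j k : ℕ} :
    SameTuple (modifyFlat f i Φ) j k ↔ SameTuple Φ j k := by
  simp only [SameTuple, tupleIdx_eq_of_shape_eq (shape_modifyFlat f i Φ)]

lemma modifyFlat_comm {i j : ℕ} (hij : i ≠ j) (Φ : State) :
    modifyFlat f i (modifyFlat g j Φ) = modifyFlat g j (modifyFlat f i Φ) := by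
  refine eq_of_shape_eq_of_entries_eq (by simp only [shape_modifyFlat]) ?_
  rw [entries_modifyFlat, entries_modifyFlat, entries_modifyFlat, entries_modifyFlat,
    numPos_modifyFlat, numPos_modifyFlat, entry_modifyFlat_of_ne g Φ hij.symm,
    entry_modifyFlat_of_ne f Φ hij]
  split_ifs <;> first | rfl | exact List.set_comm _ _ hij.symm

lemma dominantAt_modifyFlat_iff {i j : ℕ} {Φ : State} (h : ¬SameTuple Φ i j) :
    DominantAt (modifyFlat f j Φ) i ↔ DominantAt Φ i := by
  have hij : j ≠ i := fun hji => h (hji ▸ rfl)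
  refine forall_congr' fun k => ?_
  rw [numPos_modifyFlat, sameTuple_modifyFlat, entry_modifyFlat_of_ne f Φ hij]
  refine imp_congr_right fun _ => imp_congr_right fun hik => ?_
  rw [entry_modifyFlat_of_ne f Φ fun hjk => h (by rwa [hjk])]

end modifyFlat

lemma DominantAt.modifyFlat_add_one {Φ : State} {i : ℕ} (h : DominantAt Φ i)
    (hi : i < numPos Φ) : DominantAt (modifyFlat (· + 1) i Φ) i := by
  intro k hk hik
  rw [numPos_modifyFlat] at hk
  rw [sameTuple_modifyFlat] at hik
  have h0 := h.entry_nonneg hi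
  rw [entry_modifyFlat_self _ hi]
  rcases eq_or_ne i k with rfl | hne
  · rw [entry_modifyFlat_self _ hi, abs_of_nonneg (by omega)]
  · rw [entry_modifyFlat_of_ne _ _ hne]
    exact (h k hk hik).trans (by omega)

section joinAt

lemma joinAt_cons_zero (t : List ℤ) (ts : State) :
    joinAt (t :: ts) 0 = (t ++ ts.getD 0 []) :: ts.drop 1 :=
  rfl

lemma joinAt_cons_succ (t : List ℤ) (ts : State) (d : ℕ) :
    joinAt (t :: ts) (d + 1) = t :: joinAt ts d :=
  rfl

lemma entries_joinAt (Φ : State) (d : ℕ) : entries (joinAt Φ d) = entries Φ := by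
  induction d generalizing Φ with
  | zero =>
    rcases Φ with _ | ⟨t, _ | ⟨u, us⟩⟩ <;> simp [joinAt, entries]
  | succ d ih =>
    cases Φ with
    | nil => simp [joinAt, entries]
    | cons t ts => rw [joinAt_cons_succ, entries_cons, entries_cons, ih]

lemma numPos_joinAt (Φ : State) (d : ℕ) : numPos (joinAt Φ d) = numPos Φ := by
  rw [numPos, entries_joinAt, numPos]

lemma entry_joinAt (Φ : State) (d k : ℕ) : entry (joinAt Φ d) k = entry Φ k := by
  rw [entry, entries_joinAt, entry]

lemma shape_joinAt (Φ : State) (d : ℕ) :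
    shape (joinAt Φ d) = (shape Φ).take d ++
      ((shape Φ).getD d 0 + (shape Φ).getD (d + 1) 0) :: (shape Φ).drop (d + 2) := by
  simp only [shape, joinAt, List.map_append, List.map_take, List.map_cons, List.map_drop,
    List.length_append, List.getD_eq_getElem?_getD, List.getElem?_map]
  rcases Φ[d]? <;> rcases Φ[d + 1]? <;> rfl

lemma tupleIdx_joinAt {Φ : State} {i : ℕ} (d : ℕ) (hi : i < numPos Φ) :
    tupleIdx (joinAt Φ d) i =
      if tupleIdx Φ i ≤ d then tupleIdx Φ i else tupleIdx Φ i - 1 := by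
  induction d generalizing Φ i with
  | zero =>
    rcases Φ with _ | ⟨t, _ | ⟨u, us⟩⟩
    · simp [numPos, entries] at hi
    · simp_all [joinAt_cons_zero, tupleIdx, numPos, entries]
    · simp only [joinAt_cons_zero, List.getD_cons_zero, List.drop_one, List.tail_cons, tupleIdx,
        List.length_append, Nat.sub_sub]
      split_ifs <;> omega
  | succ d ih =>
    cases Φ with
    | nil => simp [numPos, entries] at hi
    | cons t ts =>
      rw [numPos_cons] at hi
      rw [joinAt_cons_succ]
      simp only [tupleIdx]
      by_cases h : i < t.length
      · simp [h]
      · simp only [h, if_false, ih (by omega : i - t.length < numPos ts)]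
        split_ifs <;> omega

lemma SameTuple.joinAt {Φ : State} {i k : ℕ} (d : ℕ) (hi : i < numPos Φ) (hk : k < numPos Φ)
    (h : SameTuple Φ i k) : SameTuple (joinAt Φ d) i k := by
  unfold SameTuple at *
  rw [tupleIdx_joinAt d hi, tupleIdx_joinAt d hk, h]

lemma modifyFlat_joinAt (f : ℤ → ℤ) (i d : ℕ) (Φ : State) :
    modifyFlat f i (joinAt Φ d) = joinAt (modifyFlat f i Φ) d := by
  refine eq_of_shape_eq_of_entries_eq ?_ ?_
  · rw [shape_modifyFlat, shape_joinAt, shape_joinAt, shape_modifyFlat]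
  · rw [entries_modifyFlat, entries_joinAt, entries_joinAt, entries_modifyFlat, numPos_joinAt,
      entry_joinAt]

lemma DominantAt.of_joinAt {Φ : State} {i d : ℕ} (h : DominantAt (joinAt Φ d) i)
    (hi : i < numPos Φ) : DominantAt Φ i := fun k hk hik => by
  simpa only [entry_joinAt] using h k (by rwa [numPos_joinAt]) (hik.joinAt d hi hk)

end joinAt

lemma validSeq_append {ms ms' : List Move} {Φ Ψ : State} :
    ValidSeq (ms ++ ms') Φ Ψ ↔ ∃ Θ, ValidSeq ms Φ Θ ∧ ValidSeq ms' Θ Ψ := by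
  induction ms generalizing Φ with
  | nil => simp [ValidSeq]
  | cons m ms ih => simp [ValidSeq, ih, and_assoc]

section Commutation

variable {a b d i : ℕ} {Φ Ψ : State}

lemma validSeq_t2_t1_of_validSeq_t1_t2 (h : ValidSeq [.t1 d, .t2 i] Φ Ψ) :
    ValidSeq [.t2 i, .t1 d] Φ Ψ := by
  obtain ⟨hd, ⟨hi, hdom⟩, rfl⟩ := h
  rw [Move.apply, numPos_joinAt] at hi
  refine ⟨⟨hi, hdom.of_joinAt hi⟩, ?_, (modifyFlat_joinAt _ i d Φ).symm⟩
  show d + 1 < (modifyFlat _ i Φ).length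
  rwa [length_modifyFlat]

lemma ne_of_validSeq_t3_t2 (h : ValidSeq [.t3 a b, .t2 i] Φ Ψ) : i ≠ b := by
  obtain ⟨⟨-, hb, hab, -, -, hb0⟩, ⟨hi, hdom⟩, -⟩ := h
  rintro rfl
  have hnonneg := hdom.entry_nonneg hi
  rw [Move.apply, entry_modifyFlat_self _ (by rwa [numPos_modifyFlat]),
    entry_modifyFlat_of_ne _ _ hab] at hnonneg
  omega

lemma validSeq_t2_t3_of_validSeq_t3_t2 (h : ValidSeq [.t3 a b, .t2 i] Φ Ψ)
    (hia : ¬SameTuple Φ i a) : ValidSeq [.t2 i, .t3 a b] Φ Ψ := by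
  have hib := ne_of_validSeq_t3_t2 h
  obtain ⟨⟨ha, hb, hab, hsab, hdoma, hb0⟩, ⟨hi, hdomi⟩, rfl⟩ := h
  have hai : ¬SameTuple Φ a i := fun h => hia h.symm
  have hia' : i ≠ a := by rintro rfl; exact hia rfl
  have hib' : ¬SameTuple (modifyFlat (· + 1) a Φ) i b := by
    rw [sameTuple_modifyFlat]
    exact fun h => hia (h.trans hsab.symm)
  simp only [Move.apply, numPos_modifyFlat] at hi hdomi
  refine ⟨⟨hi, ?_⟩, ⟨?_, ?_, hab, ?_, ?_, ?_⟩, ?_⟩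
  · rwa [dominantAt_modifyFlat_iff _ hib', dominantAt_modifyFlat_iff _ hia] at hdomi
  · rwa [Move.apply, numPos_modifyFlat]
  · rwa [Move.apply, numPos_modifyFlat]
  · rwa [Move.apply, sameTuple_modifyFlat]
  · exact (dominantAt_modifyFlat_iff _ hai).2 hdoma
  · rwa [Move.apply, entry_modifyFlat_of_ne _ _ hib]
  · show _ = _
    simp only [Move.apply]
    rw [modifyFlat_comm _ _ hib, modifyFlat_comm _ _ hia']

lemma validSeq_t2_t3_of_validSeq_t3_t2_of_sameTuple (h : ValidSeq [.t3 a b, .t2 i] Φ Ψ)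
    (hia : SameTuple Φ i a) : ValidSeq [.t2 a, .t3 i b] Φ Ψ := by
  have hib := ne_of_validSeq_t3_t2 h
  obtain ⟨⟨ha, hb, hab, hsab, hdoma, hb0⟩, ⟨hi, hdomi⟩, rfl⟩ := h
  simp only [Move.apply, numPos_modifyFlat] at hi hdomi
  refine ⟨⟨ha, hdoma⟩, ⟨?_, ?_, hib, ?_, ?_, ?_⟩, ?_⟩
  · rwa [Move.apply, numPos_modifyFlat]
  · rwa [Move.apply, numPos_modifyFlat]
  · rw [Move.apply, sameTuple_modifyFlat]
    exact hia.trans hsab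
  · refine (hdoma.modifyFlat_add_one ha).of_le (by rwa [sameTuple_modifyFlat]) ?_
    have hbound := hdomi a (by rwa [numPos_modifyFlat, numPos_modifyFlat])
      (by rwa [sameTuple_modifyFlat, sameTuple_modifyFlat])
    rw [entry_modifyFlat_of_ne _ _ hab.symm, entry_modifyFlat_of_ne _ _ hib.symm] at hbound
    exact (le_abs_self _).trans hbound
  · rwa [Move.apply, entry_modifyFlat_of_ne _ _ hab]
  · exact (modifyFlat_comm _ _ hib _).symm

end Commutation

lemma exists_t2_first_of_validSeq_pair {m : Move} (hm : m.isType1 ∨ m.isType3) {i : ℕ}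
    {Φ Ψ : State} (h : ValidSeq [m, .t2 i] Φ Ψ) :
    ∃ i' m', (m'.isType1 ∨ m'.isType3) ∧ ValidSeq [.t2 i', m'] Φ Ψ := by
  cases m with
  | t1 d => exact ⟨i, .t1 d, Or.inl trivial, validSeq_t2_t1_of_validSeq_t1_t2 h⟩
  | t3 a b =>
    by_cases hia : SameTuple Φ i a
    · exact ⟨a, .t3 i b, Or.inr trivial, validSeq_t2_t3_of_validSeq_t3_t2_of_sameTuple h hia⟩
    · exact ⟨i, .t3 a b, Or.inr trivial, validSeq_t2_t3_of_validSeq_t3_t2 h hia⟩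
  | _ => simp [Move.isType1, Move.isType3] at hm

lemma exists_t2s_first_of_validSeq_cons {m : Move} (hm : m.isType1 ∨ m.isType3) (is : List ℕ)
    {Φ Ψ : State} (h : ValidSeq (m :: is.map .t2) Φ Ψ) :
    ∃ (is' : List ℕ) (m' : Move), (m'.isType1 ∨ m'.isType3) ∧
      ValidSeq (is'.map .t2 ++ [m']) Φ Ψ := by
  induction is generalizing m Φ with
  | nil => exact ⟨[], m, hm, h⟩
  | cons i is ih =>
    obtain ⟨hm₁, hi, hrest⟩ := h
    obtain ⟨i', m', hm', hi', hm₁', heq⟩ :=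
      exists_t2_first_of_validSeq_pair hm ⟨hm₁, hi, rfl⟩
    obtain ⟨is', m'', hm'', h'⟩ := ih hm' ⟨hm₁', heq ▸ hrest⟩
    exact ⟨i' :: is', m'', hm'', hi', h'⟩

def ReachableT2First (Φ Ψ : State) : Prop :=
  ∃ (is : List ℕ) (ms : List Move), (∀ m ∈ ms, m.isType1 ∨ m.isType3) ∧
    ValidSeq (is.map .t2 ++ ms) Φ Ψ

lemma ReachableT2First.cons_of_isType13 {m : Move} (hm : m.isType1 ∨ m.isType3) {Φ Ψ : State}
    (hv : m.Valid Φ) (h : ReachableT2First (m.apply Φ) Ψ) : ReachableT2First Φ Ψ := by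
  obtain ⟨is, ms, hms, h⟩ := h
  obtain ⟨Θ, h2, h13⟩ := validSeq_append.1 h
  obtain ⟨is', m', hm', h'⟩ := exists_t2s_first_of_validSeq_cons hm is ⟨hv, h2⟩
  refine ⟨is', m' :: ms, List.forall_mem_cons.2 ⟨hm', hms⟩, ?_⟩
  rw [← List.singleton_append, ← List.append_assoc, validSeq_append]
  exact ⟨Θ, h', h13⟩

lemma reachableT2First_of_validSeq {ms : List Move} (hms : ∀ m ∈ ms, m.isType123)
    {Φ Ψ : State} (h : ValidSeq ms Φ Ψ) : ReachableT2First Φ Ψ := by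
  induction ms generalizing Φ with
  | nil => exact ⟨[], [], by simp, h⟩
  | cons m ms ih =>
    obtain ⟨hm, hrest⟩ := h
    have hreach := ih (fun x hx => hms x (List.mem_cons_of_mem _ hx)) hrest
    cases m with
    | t1 d => exact hreach.cons_of_isType13 (m := .t1 d) (Or.inl trivial) hm
    | t2 i =>
      obtain ⟨is, ms', hms', h'⟩ := hreach
      exact ⟨i :: is, ms', hms', hm, h'⟩
    | t3 a b => exact hreach.cons_of_isType13 (m := .t3 a b) (Or.inr trivial) hm
    | _ => exact (hms _ List.mem_cons_self).elim

/-- If a tuple is C*_{Z,3}-realizable, it can be obtained by a sequence of valid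
moves of types 1, 2 and 3 in which all type 2 moves come first. -/
theorem CStarZ3_with_T2_at_beginning (l : List ℤ) (h : CStarZ3 l) :
    ∃ ms2 ms13 : List Move,
      (∀ m ∈ ms2, m.isType2) ∧
      (∀ m ∈ ms13, m.isType1 ∨ m.isType3) ∧
      ValidSeq (ms2 ++ ms13) (List.replicate l.length ([0] : List ℤ)) [l] := by
  obtain ⟨ms, h123, hv⟩ := h
  obtain ⟨is, ms13, h13, hv'⟩ := reachableT2First_of_validSeq h123 hv
  exact ⟨is.map .t2, ms13, by simp [Move.isType2], h13, hv'⟩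

end CPaper
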